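/- Let A be an irreducible deterministic complete finite automaton over an alphabet containing a letter a, and consider the functional graph of the letter a (red edges). Suppose the maximal a-level ℓ of states is positive, where the level of a state is its distance along a-edges to the nearest state lying on an a-cycle. If all states of maximal level ℓ belong to the same a-tree (the tree of the functional graph of a rooted at a single cycle state), then A has a stable pair of states. -/

import Mathlib

def dcaRun {Q A : Type*} (δ : Q → A → Q) (p : Q) (w : List A) : Q := w.foldl δ p

def Synchronizable {Q A : Type*} (δ : Q → A → Q) (p q : Q) : Prop :=
  ∃ w : List A, dcaRun δ p w = dcaRun δ q w

def StablePair {Q A : Type*} (δ : Q → A → Q) (p q : Q) : Prop :=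
  ∀ u : List A, Synchronizable δ (dcaRun δ p u) (dcaRun δ q u)

/-- `p` lies on a cycle of the functional graph of `f`. -/
def OnCycle {Q : Type*} (f : Q → Q) (p : Q) : Prop := ∃ k > 0, f^[k] p = p

/-- The level of `p`: the least number of `f`-steps needed to reach a cycle. -/
noncomputable def aLevel {Q : Type*} (f : Q → Q) (p : Q) : ℕ :=
  sInf {k | OnCycle f (f^[k] p)}

/-- The root of the tree of `p`: the first cycle state reached from `p`. -/
noncomputable def aRoot {Q : Type*} (f : Q → Q) (p : Q) : Q := f^[aLevel f p] p

/-!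
Let `f` be the action of `a`, `p` a state of maximal level `ℓ` with root `r`, and
`s = f^[ℓ-1] p`, a state of level one. Take a word `x` of minimal rank whose image `M`
contains `p` (irreducibility). Every word is injective on `M`; since `a^ℓ` sends every
state of level `ℓ` to `r`, `p` is the only state of level `ℓ` in `M`, so in the minimal
image `M' = M·a^(ℓ-1)` every state other than `s` lies on a cycle. For `N = |Q|!` the
word `a^N` fixes all cycle states and maps `M'` into `(M' \ {s}) ∪ {c}`, `c = f^[N] s`.
Following this by any word `v` of minimal rank, both `M'·v` and `M'·a^N·v` equal the
image `Q·v`, and injectivity of `v` on `M'` leaves only `s·v = c·v`.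
-/

open Finset Function
open scoped Nat

section Run

variable {Q A : Type*}

lemma dcaRun_append (δ : Q → A → Q) (x : Q) (u v : List A) :
    dcaRun δ x (u ++ v) = dcaRun δ (dcaRun δ x u) v :=
  List.foldl_append ..

lemma dcaRun_replicate (δ : Q → A → Q) (b : A) (x : Q) (n : ℕ) :
    dcaRun δ x (List.replicate n b) = (fun q => δ q b)^[n] x := by
  induction n generalizing x with
  | zero => rfl
  | succ n ih => exact ih (δ x b)

end Run

section FunctionalGraph

variable {Q : Type*} {f : Q → Q} {x : Q} {n : ℕ}

lemma onCycle_iff_mem_periodicPts : OnCycle f x ↔ x ∈ periodicPts f :=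
  mem_periodicPts.symm

lemma OnCycle.iterate (h : OnCycle f x) (m : ℕ) : OnCycle f (f^[m] x) :=
  let ⟨k, hk, hx⟩ := h
  ⟨k, hk, IsPeriodicPt.apply_iterate hx m⟩

lemma exists_onCycle_iterate [Finite Q] (f : Q → Q) (x : Q) : ∃ k, OnCycle f (f^[k] x) := by
  obtain ⟨i, j, hij, heq⟩ := Finite.exists_ne_map_eq_of_infinite (fun i : ℕ => f^[i] x)
  wlog hlt : i < j generalizing i j
  · exact this j i hij.symm heq.symm (by omega)
  refine ⟨i, j - i, by omega, ?_⟩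
  rw [← iterate_add_apply, Nat.sub_add_cancel hlt.le, ← heq]

lemma onCycle_iterate_aLevel [Finite Q] (f : Q → Q) (x : Q) : OnCycle f (f^[aLevel f x] x) :=
  Nat.sInf_mem (exists_onCycle_iterate f x)

lemma aLevel_le_of_onCycle (h : OnCycle f (f^[n] x)) : aLevel f x ≤ n :=
  Nat.sInf_le h

lemma OnCycle.aLevel_eq_zero (h : OnCycle f x) : aLevel f x = 0 :=
  Nat.le_zero.mp (aLevel_le_of_onCycle (n := 0) h)

lemma onCycle_iterate_of_aLevel_le [Finite Q] (h : aLevel f x ≤ n) : OnCycle f (f^[n] x) := by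
  have := (onCycle_iterate_aLevel f x).iterate (n - aLevel f x)
  rwa [← iterate_add_apply, Nat.sub_add_cancel h] at this

lemma aLevel_iterate [Finite Q] (h : n ≤ aLevel f x) : aLevel f (f^[n] x) = aLevel f x - n := by
  apply le_antisymm
  · apply aLevel_le_of_onCycle
    rw [← iterate_add_apply, Nat.sub_add_cancel h]
    exact onCycle_iterate_aLevel f x
  · have := aLevel_le_of_onCycle (x := x) <| by
      rw [iterate_add_apply]; exact onCycle_iterate_aLevel f (f^[n] x)
    omega

lemma OnCycle.iterate_factorial_card [Fintype Q] (h : OnCycle f x) :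
    f^[(Fintype.card Q)!] x = x :=
  isPeriodicPt_factorial_card_of_mem_periodicPts (onCycle_iff_mem_periodicPts.mp h)

lemma image_iterate_factorial_card_subset [Fintype Q] [DecidableEq Q] {M : Finset Q} {p : Q}
    (hM : ∀ z ∈ M, z ≠ p → aLevel f z ≤ n) :
    (M.image f^[n]).image f^[(Fintype.card Q)!] ⊆
      insert (f^[(Fintype.card Q)!] (f^[n] p)) ((M.image f^[n]).erase (f^[n] p)) := by
  intro y hy
  obtain ⟨_, ⟨z, hz, rfl⟩, rfl⟩ := by simpa only [mem_image] using hy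
  by_cases hzp : f^[n] z = f^[n] p
  · exact hzp ▸ mem_insert_self _ _
  · have hcyc := onCycle_iterate_of_aLevel_le (hM z hz fun h => hzp (h ▸ rfl))
    rw [hcyc.iterate_factorial_card]
    exact mem_insert_of_mem (mem_erase.mpr ⟨hzp, mem_image_of_mem _ hz⟩)

end FunctionalGraph

section Rank

variable {Q A : Type*} [Fintype Q] [DecidableEq Q] (δ : Q → A → Q)

def runImage (w : List A) : Finset Q :=
  univ.image (dcaRun δ · w)

def IsMinRank (w : List A) : Prop :=
  ∀ v : List A, #(runImage δ w) ≤ #(runImage δ v)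

variable {δ}

lemma dcaRun_mem_runImage (q : Q) (w : List A) : dcaRun δ q w ∈ runImage δ w :=
  mem_image_of_mem _ (mem_univ q)

lemma runImage_append (u v : List A) :
    runImage δ (u ++ v) = (runImage δ u).image (dcaRun δ · v) := by
  simp only [runImage, image_image, comp_def, dcaRun_append]

lemma runImage_append_replicate (u : List A) (b : A) (n : ℕ) :
    runImage δ (u ++ List.replicate n b) = (runImage δ u).image (fun q => δ q b)^[n] := by
  simp only [runImage_append, dcaRun_replicate]

lemma runImage_append_subset (u v : List A) : runImage δ (u ++ v) ⊆ runImage δ v := by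
  rw [runImage_append]
  exact image_subset_image (subset_univ _)

variable (δ) in
lemma exists_isMinRank : ∃ w : List A, IsMinRank δ w :=
  ⟨argmin (fun w : List A => #(runImage δ w)),
    fun v => argmin_le (fun w : List A => #(runImage δ w)) v⟩

namespace IsMinRank

variable {w : List A} (hw : IsMinRank δ w)
include hw

lemma append_left (u : List A) : IsMinRank δ (u ++ w) :=
  fun v => (card_le_card (runImage_append_subset u w)).trans (hw v)

lemma append_right (v : List A) : IsMinRank δ (w ++ v) := by
  intro v'
  refine le_trans ?_ (hw v')
  rw [runImage_append]
  exact card_image_le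

lemma runImage_append_eq (u : List A) : runImage δ (u ++ w) = runImage δ w :=
  eq_of_subset_of_card_le (runImage_append_subset u w) (hw _)

lemma injOn (v : List A) : Set.InjOn (dcaRun δ · v) (runImage δ w) := by
  apply injOn_of_card_image_eq
  rw [← runImage_append]
  exact le_antisymm ((hw.append_right v) w) (hw _)

end IsMinRank

lemma exists_isMinRank_mem {p : Q} (hp : ∀ q : Q, ∃ w : List A, dcaRun δ q w = p) :
    ∃ x : List A, IsMinRank δ x ∧ p ∈ runImage δ x := by
  obtain ⟨w, hw⟩ := exists_isMinRank δ
  obtain ⟨v, hv⟩ := hp (dcaRun δ p w)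
  refine ⟨w ++ v, hw.append_right v, ?_⟩
  rw [← hv, ← dcaRun_append]
  exact dcaRun_mem_runImage p _

theorem stablePair_of_isMinRank {x y : List A} {s c : Q} (hx : IsMinRank δ x)
    (hs : s ∈ runImage δ x)
    (hy : (runImage δ x).image (dcaRun δ · y) ⊆ insert c ((runImage δ x).erase s)) :
    StablePair δ s c := by
  obtain ⟨w, hw⟩ := exists_isMinRank δ
  intro u
  refine ⟨w, ?_⟩
  rw [← dcaRun_append, ← dcaRun_append]
  set v := u ++ w
  have hv := hw.append_left u
  have hsv : dcaRun δ s v ∈ (insert c ((runImage δ x).erase s)).image (dcaRun δ · v) := by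
    have hmem : dcaRun δ s v ∈ runImage δ (x ++ y ++ v) := by
      rw [hv.runImage_append_eq, ← hv.runImage_append_eq x, runImage_append]
      exact mem_image_of_mem _ hs
    rw [runImage_append, runImage_append] at hmem
    exact image_subset_image hy hmem
  simp only [image_insert, mem_insert, mem_image, mem_erase] at hsv
  obtain hsc | ⟨d, ⟨hds, hd⟩, hdv⟩ := hsv
  · exact hsc
  · exact absurd (hx.injOn v hd hs hdv) hds

end Rank

/-- Trahtman's key lemma: in an irreducible automaton of positive level, if all
states of maximal level belong to the same tree of the functional graph of the
letter `a`, then the automaton has a stable pair. -/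
theorem stablePair_of_maximal_states_same_tree
    {Q A : Type*} [Fintype Q] (δ : Q → A → Q) (a : A)
    (hirr : ∀ p q : Q, ∃ w : List A, dcaRun δ p w = q)
    (ℓ : ℕ) (hpos : 0 < ℓ)
    (hub : ∀ p : Q, aLevel (fun q => δ q a) p ≤ ℓ)
    (hmax : ∃ p : Q, aLevel (fun q => δ q a) p = ℓ)
    (htree : ∃ r : Q, ∀ p : Q, aLevel (fun q => δ q a) p = ℓ →
        aRoot (fun q => δ q a) p = r) :
    ∃ s t : Q, s ≠ t ∧ StablePair δ s t := by
  classical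
  set f : Q → Q := fun q => δ q a
  obtain ⟨p, hp⟩ := hmax
  obtain ⟨r, hr⟩ := htree
  obtain ⟨x, hx, hpx⟩ := exists_isMinRank_mem (fun q => hirr q p)
  have hlevel : ∀ z ∈ runImage δ x, z ≠ p → aLevel f z ≤ ℓ - 1 := by
    intro z hz hzp
    suffices aLevel f z ≠ ℓ by have := hub z; omega
    intro hzℓ
    refine hzp (hx.injOn (List.replicate ℓ a) hz hpx ?_)
    have hrz := hr z hzℓ
    have hrp := hr p hp
    rw [aRoot, hzℓ] at hrz
    rw [aRoot, hp] at hrp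
    simp only [dcaRun_replicate]
    exact hrz.trans hrp.symm
  have hs : aLevel f (f^[ℓ - 1] p) = 1 := by
    rw [aLevel_iterate (hp ▸ Nat.sub_le ℓ 1), hp]; omega
  refine ⟨f^[ℓ - 1] p, f^[(Fintype.card Q)!] (f^[ℓ - 1] p), fun hsc => ?_,
    stablePair_of_isMinRank (hx.append_right (List.replicate (ℓ - 1) a))
      (y := List.replicate (Fintype.card Q)! a) ?_ ?_⟩
  · have hcyc : OnCycle f (f^[(Fintype.card Q)!] (f^[ℓ - 1] p)) :=
      onCycle_iterate_of_aLevel_le (hs.trans_le (Nat.factorial_pos _))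
    rw [← hsc] at hcyc
    exact absurd (hs.symm.trans hcyc.aLevel_eq_zero) one_ne_zero
  · rw [runImage_append_replicate]
    exact mem_image_of_mem _ hpx
  · simp only [runImage_append_replicate, dcaRun_replicate]
    exact image_iterate_factorial_card_subset hlevel
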